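/- arXiv:1901.09058 — 2 statements merged into one kernel-verified Lean document; each statement's English description precedes it below -/
import Mathlib

section
/- (Embedding lemma for bounded-degree graphs) Let c and d be positive integers and let ε > 0 satisfy 1/(2c)^d > 2d²ε. Let H₁ be a simple graph and let A₁, …, A_{d+1} be pairwise disjoint subsets of V(H₁) such that for all 1 ≤ i < j ≤ d+1 the pair (A_i, A_j) is ε-regular in H₁ with edge density d(A_i, A_j) ≥ 1/c. Let G be a simple graph on n vertices with maximum degree at most d, where n ≤ d²·ε·|A_r| for every r ∈ {1,…,d+1}. Then H₁ contains a copy of G; moreover the copy can be chosen so that each vertex of G is placed in one of the sets A₁, …, A_{d+1}, with adjacent vertices of G placed in different sets. -/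
open Finset
open scoped Classical

/-- The edge density `d(X, Y)` of a pair of disjoint vertex sets in a simple graph:
the number of edges with one endpoint in `X` and the other in `Y`, divided by
`|X|·|Y|`.  (For disjoint `X` and `Y`, each such edge corresponds to exactly one
ordered pair in `X × Y`.) -/
noncomputable def pairDensity {V : Type*} (H : SimpleGraph V) (X Y : Finset V) : ℝ :=
  (({p : V × V | p.1 ∈ X ∧ p.2 ∈ Y ∧ H.Adj p.1 p.2}.ncard : ℝ)) /
    ((X.card : ℝ) * (Y.card : ℝ))

/-- The pair `(A, B)` is `ε`-regular: for all `X ⊆ A` and `Y ⊆ B` with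
`|X| ≥ ε|A|` and `|Y| ≥ ε|B|` one has `|d(X,Y) − d(A,B)| < ε`. -/
def IsRegularPair {V : Type*} (H : SimpleGraph V) (ε : ℝ) (A B : Finset V) : Prop :=
  ∀ X ⊆ A, ∀ Y ⊆ B,
    ε * (A.card : ℝ) ≤ (X.card : ℝ) → ε * (B.card : ℝ) ≤ (Y.card : ℝ) →
      |pairDensity H X Y - pairDensity H A B| < ε

noncomputable def eP {V : Type*} (H : SimpleGraph V) (X Y : Finset V) : ℕ :=
  ((X ×ˢ Y).filter fun p => H.Adj p.1 p.2).card

lemma edgePairs_ncard {V : Type*} (H : SimpleGraph V) (X Y : Finset V) :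
    {p : V × V | p.1 ∈ X ∧ p.2 ∈ Y ∧ H.Adj p.1 p.2}.ncard = eP H X Y := by
  have h : {p : V × V | p.1 ∈ X ∧ p.2 ∈ Y ∧ H.Adj p.1 p.2}
      = (((X ×ˢ Y).filter fun p => H.Adj p.1 p.2) : Finset (V × V)) := by
    ext p
    simp [Finset.mem_filter, Finset.mem_product, and_assoc]
  rw [h, Set.ncard_coe_finset, eP]

lemma pairDensity_eq_eP {V : Type*} (H : SimpleGraph V) (X Y : Finset V) :
    pairDensity H X Y = (eP H X Y : ℝ) / ((X.card : ℝ) * (Y.card : ℝ)) := by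
  rw [pairDensity, edgePairs_ncard]

lemma eP_eq_sum {V : Type*} (H : SimpleGraph V) (X Y : Finset V) :
    eP H X Y = ∑ x ∈ X, (Y.filter fun y => H.Adj x y).card := by
  rw [eP, Finset.card_filter, Finset.sum_product]
  exact Finset.sum_congr rfl fun x _ => (Finset.card_filter _ _).symm

lemma eP_comm {V : Type*} (H : SimpleGraph V) (X Y : Finset V) :
    eP H X Y = eP H Y X := by
  apply Finset.card_bij (fun p _ => Prod.swap p)
  · intro p hp
    simp only [Finset.mem_filter, Finset.mem_product] at hp ⊢
    exact ⟨⟨hp.1.2, hp.1.1⟩, hp.2.symm⟩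
  · intro p hp q hq h
    exact Prod.swap_injective h
  · intro p hp
    simp only [Finset.mem_filter, Finset.mem_product] at hp ⊢
    exact ⟨Prod.swap p, ⟨⟨⟨hp.1.2, hp.1.1⟩, hp.2.symm⟩, rfl⟩⟩

lemma pairDensity_comm {V : Type*} (H : SimpleGraph V) (X Y : Finset V) :
    pairDensity H X Y = pairDensity H Y X := by
  rw [pairDensity_eq_eP, pairDensity_eq_eP, eP_comm, mul_comm]

lemma pairDensity_lt_of_forall_lt {V : Type*} (H : SimpleGraph V) {X Y : Finset V}
    (hX : X.Nonempty) (hY : Y.Nonempty) {t : ℝ}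
    (h : ∀ x ∈ X, ((Y.filter fun y => H.Adj x y).card : ℝ) < t * (Y.card : ℝ)) :
    pairDensity H X Y < t := by
  have hXc : (0:ℝ) < X.card := by exact_mod_cast Finset.card_pos.2 hX
  have hYc : (0:ℝ) < Y.card := by exact_mod_cast Finset.card_pos.2 hY
  rw [pairDensity_eq_eP, div_lt_iff₀ (by positivity)]
  have : (eP H X Y : ℝ) = ∑ x ∈ X, ((Y.filter fun y => H.Adj x y).card : ℝ) := by
    rw [eP_eq_sum]; push_cast; ring
  rw [this]
  calc ∑ x ∈ X, ((Y.filter fun y => H.Adj x y).card : ℝ)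
      < ∑ _x ∈ X, t * (Y.card : ℝ) := Finset.sum_lt_sum_of_nonempty hX h
    _ = (X.card : ℝ) * (t * (Y.card : ℝ)) := by rw [Finset.sum_const, nsmul_eq_mul]
    _ = t * ((X.card : ℝ) * (Y.card : ℝ)) := by ring

lemma exists_proper_coloring {n d : ℕ} (G : SimpleGraph (Fin n))
    (hΔ : ∀ w : Fin n, (univ.filter fun u : Fin n => G.Adj u w).card ≤ d) :
    ∃ ρ : Fin n → Fin (d + 1), ∀ u v, G.Adj u v → ρ u ≠ ρ v := by
  have key : ∀ m : ℕ, ∃ ρ : Fin n → Fin (d + 1),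
      ∀ u v : Fin n, (u : ℕ) < m → (v : ℕ) < m → G.Adj u v → ρ u ≠ ρ v := by
    intro m
    induction m with
    | zero => exact ⟨fun _ => 0, fun u v hu _ _ => absurd hu (Nat.not_lt_zero _)⟩
    | succ m ih =>
      obtain ⟨ρ, hρ⟩ := ih
      by_cases hm : m < n
      · set v : Fin n := ⟨m, hm⟩ with hv
        set S : Finset (Fin (d + 1)) :=
          (univ.filter fun u : Fin n => (u : ℕ) < m ∧ G.Adj u v).image ρ with hS
        have hScard : S.card < d + 1 := by
          calc S.card ≤ (univ.filter fun u : Fin n => (u : ℕ) < m ∧ G.Adj u v).card :=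
                Finset.card_image_le
            _ ≤ (univ.filter fun u : Fin n => G.Adj u v).card := by
                apply Finset.card_le_card
                intro u hu
                simp only [Finset.mem_filter] at hu ⊢
                exact ⟨hu.1, hu.2.2⟩
            _ ≤ d := hΔ v
            _ < d + 1 := Nat.lt_succ_self d
        have : ∃ col : Fin (d + 1), col ∉ S := by
          by_contra h
          push_neg at h
          have : (univ : Finset (Fin (d + 1))) ⊆ S := fun x _ => h x
          have := Finset.card_le_card this
          simp at this
          omega
        obtain ⟨col, hcol⟩ := this
        refine ⟨Function.update ρ v col, ?_⟩
        intro u w hu hw hadj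
        have hvu : ∀ x : Fin n, (x : ℕ) < m → x ≠ v := by
          intro x hx hxv; rw [hxv] at hx; simp [hv] at hx
        rcases Nat.lt_succ_iff_lt_or_eq.1 hu with hu' | hu' <;>
          rcases Nat.lt_succ_iff_lt_or_eq.1 hw with hw' | hw'
        · rw [Function.update_of_ne (hvu u hu'), Function.update_of_ne (hvu w hw')]
          exact hρ u w hu' hw' hadj
        · have hwv : w = v := Fin.ext hw'
          subst hwv
          rw [Function.update_of_ne (hvu u hu'), Function.update_self]
          intro hcontra
          exact hcol (Finset.mem_image.2 ⟨u, by simp [hu', hadj], hcontra⟩)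
        · have huv : u = v := Fin.ext hu'
          subst huv
          rw [Function.update_of_ne (hvu w hw'), Function.update_self]
          intro hcontra
          exact hcol (Finset.mem_image.2 ⟨w, by simp [hw', hadj.symm], hcontra.symm⟩)
        · exact absurd (Fin.ext (hu'.trans hw'.symm) : u = w) (G.ne_of_adj hadj)
      · exact ⟨ρ, fun u v hu hw hadj =>
          hρ u v (lt_of_lt_of_le u.isLt (not_lt.1 hm)) (lt_of_lt_of_le v.isLt (not_lt.1 hm)) hadj⟩
  obtain ⟨ρ, hρ⟩ := key n
  exact ⟨ρ, fun u v hadj => hρ u v u.isLt v.isLt hadj⟩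

noncomputable def cand {V : Type*} {n d : ℕ} (H₁ : SimpleGraph V) (A : Fin (d + 1) → Finset V)
    (G : SimpleGraph (Fin n)) (ρ : Fin n → Fin (d + 1)) (φ : Fin n → V) (m : ℕ) (w : Fin n) :
    Finset V :=
  (A (ρ w)).filter fun x => ∀ u : Fin n, (u : ℕ) < m → G.Adj u w → H₁.Adj (φ u) x

noncomputable def kk {n : ℕ} (G : SimpleGraph (Fin n)) (m : ℕ) (w : Fin n) : ℕ :=
  (univ.filter fun u : Fin n => (u : ℕ) < m ∧ G.Adj u w).card

lemma kk_le {n d : ℕ} (G : SimpleGraph (Fin n))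
    (hΔ : ∀ w : Fin n, (univ.filter fun u : Fin n => G.Adj u w).card ≤ d)
    (m : ℕ) (w : Fin n) : kk G m w ≤ d := by
  refine le_trans (Finset.card_le_card ?_) (hΔ w)
  intro u hu
  simp only [Finset.mem_filter] at hu ⊢
  exact ⟨hu.1, hu.2.2⟩

lemma cand_zero {V : Type*} {n d : ℕ} (H₁ : SimpleGraph V) (A : Fin (d + 1) → Finset V)
    (G : SimpleGraph (Fin n)) (ρ : Fin n → Fin (d + 1)) (φ : Fin n → V) (w : Fin n) :
    cand H₁ A G ρ φ 0 w = A (ρ w) := by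
  rw [cand]
  apply Finset.filter_true_of_mem
  intro x _ u hu
  exact absurd hu (Nat.not_lt_zero _)

lemma kk_zero {n : ℕ} (G : SimpleGraph (Fin n)) (w : Fin n) : kk G 0 w = 0 := by
  rw [kk, Finset.card_eq_zero]
  ext u
  simp

lemma cand_subset {V : Type*} {n d : ℕ} (H₁ : SimpleGraph V) (A : Fin (d + 1) → Finset V)
    (G : SimpleGraph (Fin n)) (ρ : Fin n → Fin (d + 1)) (φ : Fin n → V) (m : ℕ) (w : Fin n) :
    cand H₁ A G ρ φ m w ⊆ A (ρ w) :=
  Finset.filter_subset _ _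

lemma cand_succ_of_not_adj {V : Type*} {n d : ℕ} (H₁ : SimpleGraph V)
    (A : Fin (d + 1) → Finset V) (G : SimpleGraph (Fin n)) (ρ : Fin n → Fin (d + 1))
    (φ : Fin n → V) (m : ℕ) (hm : m < n) (x : V) (w : Fin n)
    (hadj : ¬ G.Adj ⟨m, hm⟩ w) :
    cand H₁ A G ρ (Function.update φ ⟨m, hm⟩ x) (m + 1) w = cand H₁ A G ρ φ m w := by
  rw [cand, cand]
  apply Finset.filter_congr
  intro y _
  constructor
  · intro h u hu hadj'
    have huv : u ≠ ⟨m, hm⟩ := by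
      intro he; subst he; simp only [Fin.val_mk] at *; omega
    have := h u (Nat.lt_succ_of_lt hu) hadj'
    rwa [Function.update_of_ne huv] at this
  · intro h u hu hadj'
    rcases Nat.lt_succ_iff_lt_or_eq.1 hu with hu' | hu'
    · have huv : u ≠ ⟨m, hm⟩ := by intro he; subst he; simp only [Fin.val_mk] at *; omega
      rw [Function.update_of_ne huv]
      exact h u hu' hadj'
    · have : u = ⟨m, hm⟩ := Fin.ext hu'
      subst this
      exact absurd hadj' hadj

lemma cand_succ_of_adj {V : Type*} {n d : ℕ} (H₁ : SimpleGraph V)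
    (A : Fin (d + 1) → Finset V) (G : SimpleGraph (Fin n)) (ρ : Fin n → Fin (d + 1))
    (φ : Fin n → V) (m : ℕ) (hm : m < n) (x : V) (w : Fin n)
    (hadj : G.Adj ⟨m, hm⟩ w) :
    cand H₁ A G ρ (Function.update φ ⟨m, hm⟩ x) (m + 1) w
      = (cand H₁ A G ρ φ m w).filter fun y => H₁.Adj x y := by
  ext y
  simp only [cand, Finset.mem_filter]
  constructor
  · intro ⟨hy, h⟩
    refine ⟨⟨hy, fun u hu hadj' => ?_⟩, ?_⟩
    · have huv : u ≠ ⟨m, hm⟩ := by intro he; subst he; simp only [Fin.val_mk] at *; omega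
      have := h u (Nat.lt_succ_of_lt hu) hadj'
      rwa [Function.update_of_ne huv] at this
    · have := h ⟨m, hm⟩ (by simp) hadj
      rwa [Function.update_self] at this
  · intro ⟨⟨hy, h⟩, hx⟩
    refine ⟨hy, fun u hu hadj' => ?_⟩
    rcases Nat.lt_succ_iff_lt_or_eq.1 hu with hu' | hu'
    · have huv : u ≠ ⟨m, hm⟩ := by intro he; subst he; simp only [Fin.val_mk] at *; omega
      rw [Function.update_of_ne huv]
      exact h u hu' hadj'
    · have : u = ⟨m, hm⟩ := Fin.ext hu'
      subst this
      rwa [Function.update_self]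

lemma kk_succ_of_not_adj {n : ℕ} (G : SimpleGraph (Fin n)) (m : ℕ) (hm : m < n) (w : Fin n)
    (hadj : ¬ G.Adj ⟨m, hm⟩ w) : kk G (m + 1) w = kk G m w := by
  rw [kk, kk]
  congr 1
  ext u
  simp only [Finset.mem_filter, Finset.mem_univ, true_and]
  constructor
  · rintro ⟨hu, ha⟩
    rcases Nat.lt_succ_iff_lt_or_eq.1 hu with hu' | hu'
    · exact ⟨hu', ha⟩
    · exact absurd ha (by rwa [show u = ⟨m, hm⟩ from Fin.ext hu'])
  · rintro ⟨hu, ha⟩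
    exact ⟨Nat.lt_succ_of_lt hu, ha⟩

lemma kk_succ_of_adj {n : ℕ} (G : SimpleGraph (Fin n)) (m : ℕ) (hm : m < n) (w : Fin n)
    (hadj : G.Adj ⟨m, hm⟩ w) : kk G (m + 1) w = kk G m w + 1 := by
  rw [kk, kk]
  have : (univ.filter fun u : Fin n => (u : ℕ) < m + 1 ∧ G.Adj u w)
      = insert ⟨m, hm⟩ (univ.filter fun u : Fin n => (u : ℕ) < m ∧ G.Adj u w) := by
    ext u
    simp only [Finset.mem_filter, Finset.mem_univ, true_and, Finset.mem_insert]
    constructor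
    · rintro ⟨hu, ha⟩
      rcases Nat.lt_succ_iff_lt_or_eq.1 hu with hu' | hu'
      · exact Or.inr ⟨hu', ha⟩
      · exact Or.inl (Fin.ext hu')
    · rintro (h | ⟨hu, ha⟩)
      · subst h; exact ⟨Nat.lt_succ_self m, hadj⟩
      · exact ⟨Nat.lt_succ_of_lt hu, ha⟩
  rw [this, Finset.card_insert_of_notMem (by simp)]

lemma regsym {V : Type*} {d : ℕ} {c : ℕ} {ε : ℝ} (H₁ : SimpleGraph V)
    (A : Fin (d + 1) → Finset V)
    (hreg : ∀ i j : Fin (d + 1), i < j → IsRegularPair H₁ ε (A i) (A j))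
    (hdens : ∀ i j : Fin (d + 1), i < j → (1 : ℝ) / (c : ℝ) ≤ pairDensity H₁ (A i) (A j))
    {i j : Fin (d + 1)} (hij : i ≠ j) {X Y : Finset V} (hX : X ⊆ A i) (hY : Y ⊆ A j)
    (hXc : ε * ((A i).card : ℝ) ≤ (X.card : ℝ)) (hYc : ε * ((A j).card : ℝ) ≤ (Y.card : ℝ)) :
    (1 : ℝ) / (c : ℝ) - ε < pairDensity H₁ X Y := by
  rcases lt_or_gt_of_ne hij with h | h
  · have h1 := hreg i j h X hX Y hY hXc hYc
    have h2 := hdens i j h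
    have h3 := abs_lt.1 h1
    linarith [h3.1]
  · have h1 := hreg j i h Y hY X hX hYc hXc
    have h2 := hdens j i h
    rw [pairDensity_comm H₁ Y X] at h1
    have h3 := abs_lt.1 h1
    linarith [h3.1]

set_option maxHeartbeats 1000000 in
lemma embed_aux {V : Type*} (c d : ℕ) (hc : 0 < c) (hd : 0 < d)
    (ε : ℝ) (hε : 0 < ε) (hεd : 2 * (d : ℝ) ^ 2 * ε < 1 / (2 * (c : ℝ)) ^ d)
    (H₁ : SimpleGraph V) (A : Fin (d + 1) → Finset V)
    (hreg : ∀ i j : Fin (d + 1), i < j → IsRegularPair H₁ ε (A i) (A j))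
    (hdens : ∀ i j : Fin (d + 1), i < j → (1 : ℝ) / (c : ℝ) ≤ pairDensity H₁ (A i) (A j))
    (n : ℕ) (G : SimpleGraph (Fin n))
    (hΔ : ∀ w : Fin n, (Finset.univ.filter fun u : Fin n => G.Adj u w).card ≤ d)
    (hsize : ∀ r : Fin (d + 1), (n : ℝ) ≤ (d : ℝ) ^ 2 * ε * ((A r).card : ℝ))
    (ρ : Fin n → Fin (d + 1)) (hρ : ∀ u v, G.Adj u v → ρ u ≠ ρ v) (hn : 0 < n) :
    ∀ m, m ≤ n → ∃ φ : Fin n → V,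
      (∀ u v : Fin n, (u : ℕ) < m → (v : ℕ) < m → u ≠ v → φ u ≠ φ v) ∧
      (∀ u v : Fin n, (u : ℕ) < m → (v : ℕ) < m → G.Adj u v → H₁.Adj (φ u) (φ v)) ∧
      (∀ v : Fin n, (v : ℕ) < m → φ v ∈ A (ρ v)) ∧
      (∀ w : Fin n, m ≤ (w : ℕ) →
        ((1 : ℝ) / (2 * (c : ℝ))) ^ (kk G m w) * ((A (ρ w)).card : ℝ)
          ≤ ((cand H₁ A G ρ φ m w).card : ℝ)) := by
  classical
  -- numeric preliminaries
  set a : ℝ := (1 : ℝ) / (2 * (c : ℝ)) with ha_def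
  have hcpos : (0 : ℝ) < c := by exact_mod_cast hc
  have hapos : 0 < a := by rw [ha_def]; positivity
  have hc1 : (1 : ℝ) ≤ c := by exact_mod_cast hc
  have ha1 : a ≤ 1 := by
    rw [ha_def, div_le_one (by positivity)]
    linarith
  have hd1 : (1 : ℝ) ≤ d := by exact_mod_cast hd
  have h2d2 : (1 : ℝ) ≤ 2 * (d : ℝ) ^ 2 := by nlinarith
  have had : 2 * (d : ℝ) ^ 2 * ε < a ^ d := by
    have : a ^ d = 1 / (2 * (c : ℝ)) ^ d := by rw [ha_def, div_pow, one_pow]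
    rw [this]; exact hεd
  have hεle : ε ≤ 2 * (d : ℝ) ^ 2 * ε := by
    have h := mul_le_mul_of_nonneg_right h2d2 hε.le
    rw [one_mul] at h
    exact h
  have hεad : ε < a ^ d := lt_of_le_of_lt hεle had
  have hεa : ε < a := lt_of_lt_of_le hεad (pow_le_of_le_one hapos.le ha1 hd.ne')
  have h2a : 2 * a = 1 / (c : ℝ) := by rw [ha_def]; field_simp
  have hca : a ≤ 1 / (c : ℝ) - ε := by linarith
  have hApos : ∀ r, (0 : ℝ) < ((A r).card : ℝ) := by
    intro r
    have h1 := hsize r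
    have hn1 : (1 : ℝ) ≤ n := by exact_mod_cast hn
    have h0 : (0 : ℝ) ≤ ((A r).card : ℝ) := Nat.cast_nonneg _
    have hK : (0 : ℝ) ≤ (d : ℝ) ^ 2 * ε := by positivity
    nlinarith
  intro m
  induction m with
  | zero =>
    intro _
    obtain ⟨x0, _⟩ := Finset.card_pos.1 (by exact_mod_cast hApos 0)
    refine ⟨fun _ => x0, ?_, ?_, ?_, ?_⟩
    · intro u v hu; exact absurd hu (Nat.not_lt_zero _)
    · intro u v hu; exact absurd hu (Nat.not_lt_zero _)
    · intro v hv; exact absurd hv (Nat.not_lt_zero _)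
    · intro w _
      rw [kk_zero, cand_zero, pow_zero, one_mul]
  | succ m ih =>
    intro hm1
    have hm : m < n := hm1
    obtain ⟨φ, hinj, hadjp, hmem, hcand⟩ := ih hm.le
    set v : Fin n := ⟨m, hm⟩ with hv_def
    have hvval : (v : ℕ) = m := rfl
    -- general bounds for candidate sets
    have hcb : ∀ w : Fin n, m ≤ (w : ℕ) →
        2 * (d : ℝ) ^ 2 * ε * ((A (ρ w)).card : ℝ) < ((cand H₁ A G ρ φ m w).card : ℝ) := by
      intro w hw
      have hkle := kk_le G hΔ m w
      have hpow : a ^ d ≤ a ^ (kk G m w) := pow_le_pow_of_le_one hapos.le ha1 hkle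
      calc 2 * (d : ℝ) ^ 2 * ε * ((A (ρ w)).card : ℝ)
          < a ^ d * ((A (ρ w)).card : ℝ) := by
            exact mul_lt_mul_of_pos_right had (hApos _)
        _ ≤ a ^ (kk G m w) * ((A (ρ w)).card : ℝ) :=
            mul_le_mul_of_nonneg_right hpow (Nat.cast_nonneg _)
        _ ≤ ((cand H₁ A G ρ φ m w).card : ℝ) := hcand w hw
    have hεcb : ∀ w : Fin n, m ≤ (w : ℕ) →
        ε * ((A (ρ w)).card : ℝ) ≤ ((cand H₁ A G ρ φ m w).card : ℝ) := by
      intro w hw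
      have h1 := hcb w hw
      have h2 : (0 : ℝ) < ((A (ρ w)).card : ℝ) := hApos _
      have h3 := mul_le_mul_of_nonneg_right hεle h2.le
      linarith
    have hcne : ∀ w : Fin n, m ≤ (w : ℕ) → (cand H₁ A G ρ φ m w).Nonempty := by
      intro w hw
      rw [← Finset.card_pos]
      have := hεcb w hw
      have h2 : (0 : ℝ) < ε * ((A (ρ w)).card : ℝ) := mul_pos hε (hApos _)
      exact_mod_cast lt_of_lt_of_le h2 this
    -- bad sets
    set C : Fin n → Finset V := cand H₁ A G ρ φ m with hC_def
    set Bad : Fin n → Finset V := fun w =>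
      (C v).filter fun x =>
        (((C w).filter fun y => H₁.Adj x y).card : ℝ) < (1 / (c : ℝ) - ε) * ((C w).card : ℝ)
      with hBad_def
    have hBadcard : ∀ w : Fin n, m < (w : ℕ) → G.Adj v w →
        ((Bad w).card : ℝ) < ε * ((A (ρ v)).card : ℝ) := by
      intro w hw hadj
      by_contra hbc
      push_neg at hbc
      have hBsub : Bad w ⊆ A (ρ v) :=
        (Finset.filter_subset _ _).trans (cand_subset H₁ A G ρ φ m v)
      have hCsub : C w ⊆ A (ρ w) := cand_subset H₁ A G ρ φ m w
      have hCε : ε * ((A (ρ w)).card : ℝ) ≤ ((C w).card : ℝ) := hεcb w hw.le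
      have hne : ρ v ≠ ρ w := hρ v w hadj
      have hgt := regsym H₁ A hreg hdens hne hBsub hCsub hbc hCε
      have hBne : (Bad w).Nonempty := by
        rw [← Finset.card_pos]
        have h2 : (0 : ℝ) < ε * ((A (ρ v)).card : ℝ) := mul_pos hε (hApos _)
        exact_mod_cast lt_of_lt_of_le h2 hbc
      have hCne' : (C w).Nonempty := hcne w hw.le
      have hlt := pairDensity_lt_of_forall_lt H₁ hBne hCne'
        (fun x hx => (Finset.mem_filter.1 hx).2)
      linarith
    -- counting
    set used : Finset V := (Finset.univ.filter fun u : Fin n => (u : ℕ) < m).image φ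
      with hused_def
    set Nbrs : Finset (Fin n) := Finset.univ.filter fun w : Fin n => m < (w : ℕ) ∧ G.Adj v w
      with hNbrs_def
    set T : Finset V := used ∪ Nbrs.biUnion Bad with hT_def
    have husedcard : ((used.card : ℝ)) ≤ (d : ℝ) ^ 2 * ε * ((A (ρ v)).card : ℝ) := by
      have h1 : used.card ≤ n := by
        calc used.card ≤ (Finset.univ.filter fun u : Fin n => (u : ℕ) < m).card :=
              Finset.card_image_le
          _ ≤ (Finset.univ : Finset (Fin n)).card := Finset.card_le_card (Finset.filter_subset _ _)
          _ = n := by simp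
      calc ((used.card : ℝ)) ≤ (n : ℝ) := by exact_mod_cast h1
        _ ≤ (d : ℝ) ^ 2 * ε * ((A (ρ v)).card : ℝ) := hsize (ρ v)
    have hNbrscard : Nbrs.card ≤ d := by
      refine le_trans (Finset.card_le_card ?_) (hΔ v)
      intro w hw
      simp only [hNbrs_def, Finset.mem_filter, Finset.mem_univ, true_and] at hw ⊢
      exact hw.2.symm
    have hTcard : ((T.card : ℝ)) < ((C v).card : ℝ) := by
      have h1 : T.card ≤ used.card + (Nbrs.biUnion Bad).card := Finset.card_union_le _ _
      have h2 : (Nbrs.biUnion Bad).card ≤ ∑ w ∈ Nbrs, (Bad w).card := Finset.card_biUnion_le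
      have h3 : ((∑ w ∈ Nbrs, (Bad w).card : ℕ) : ℝ) ≤ (d : ℝ) * (ε * ((A (ρ v)).card : ℝ)) := by
        push_cast
        calc ∑ w ∈ Nbrs, ((Bad w).card : ℝ)
            ≤ ∑ _w ∈ Nbrs, ε * ((A (ρ v)).card : ℝ) := by
              apply Finset.sum_le_sum
              intro w hw
              simp only [hNbrs_def, Finset.mem_filter, Finset.mem_univ, true_and] at hw
              exact (hBadcard w hw.1 hw.2).le
          _ = (Nbrs.card : ℝ) * (ε * ((A (ρ v)).card : ℝ)) := by
              rw [Finset.sum_const, nsmul_eq_mul]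
          _ ≤ (d : ℝ) * (ε * ((A (ρ v)).card : ℝ)) := by
              have : (Nbrs.card : ℝ) ≤ (d : ℝ) := by exact_mod_cast hNbrscard
              have h0 : (0 : ℝ) ≤ ε * ((A (ρ v)).card : ℝ) := by positivity
              exact mul_le_mul_of_nonneg_right this h0
      have h4 := hcb v (le_of_eq hvval.symm)
      have h5 : ((T.card : ℝ)) ≤ ((used.card : ℝ)) + ((∑ w ∈ Nbrs, (Bad w).card : ℕ) : ℝ) := by
        exact_mod_cast le_trans h1 (Nat.add_le_add_left h2 _)
      have hA0 : (0 : ℝ) < ((A (ρ v)).card : ℝ) := hApos _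
      have hdd : (d : ℝ) ≤ (d : ℝ) ^ 2 := by nlinarith
      have h6 := mul_le_mul_of_nonneg_right hdd (mul_nonneg hε.le hA0.le)
      calc ((T.card : ℝ)) ≤ (d : ℝ) ^ 2 * ε * ((A (ρ v)).card : ℝ)
            + (d : ℝ) * (ε * ((A (ρ v)).card : ℝ)) := by linarith
        _ ≤ 2 * (d : ℝ) ^ 2 * ε * ((A (ρ v)).card : ℝ) := by linarith
        _ < ((C v).card : ℝ) := h4
    have hTn : T.card < (C v).card := by exact_mod_cast hTcard
    have hex : ∃ x ∈ C v, x ∉ T := by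
      have h1 : 0 < (C v \ T).card := by
        have := Finset.le_card_sdiff T (C v)
        omega
      obtain ⟨x, hx⟩ := Finset.card_pos.1 h1
      rw [Finset.mem_sdiff] at hx
      exact ⟨x, hx.1, hx.2⟩
    obtain ⟨x, hxC, hxT⟩ := hex
    have hxused : x ∉ used := fun h => hxT (Finset.mem_union_left _ h)
    have hxBad : ∀ w ∈ Nbrs, x ∉ Bad w := by
      intro w hw hb
      exact hxT (Finset.mem_union_right _ (Finset.mem_biUnion.2 ⟨w, hw, hb⟩))
    set φ' : Fin n → V := Function.update φ v x with hφ'_def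
    have hupd : ∀ u : Fin n, (u : ℕ) < m → φ' u = φ u := by
      intro u hu
      apply Function.update_of_ne
      intro he
      rw [he] at hu
      simp only [hvval] at hu
      omega
    have hφ'v : φ' v = x := Function.update_self _ _ _
    have hmemC : ∀ u : Fin n, (u : ℕ) < m → φ u ∈ used := by
      intro u hu
      exact Finset.mem_image.2 ⟨u, by simp [hu], rfl⟩
    have hxCmem := hxC
    rw [hC_def, cand, Finset.mem_filter] at hxCmem
    refine ⟨φ', ?_, ?_, ?_, ?_⟩
    · -- injectivity
      intro u w hu hw hne
      rcases Nat.lt_succ_iff_lt_or_eq.1 hu with hu' | hu' <;>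
        rcases Nat.lt_succ_iff_lt_or_eq.1 hw with hw' | hw'
      · rw [hupd u hu', hupd w hw']
        exact hinj u w hu' hw' hne
      · have : w = v := Fin.ext hw'
        subst this
        rw [hupd u hu', hφ'v]
        intro he
        exact hxused (he ▸ hmemC u hu')
      · have : u = v := Fin.ext hu'
        subst this
        rw [hupd w hw', hφ'v]
        intro he
        exact hxused (he ▸ hmemC w hw')
      · exact absurd (Fin.ext (hu'.trans hw'.symm)) hne
    · -- adjacency
      intro u w hu hw hadj
      rcases Nat.lt_succ_iff_lt_or_eq.1 hu with hu' | hu' <;>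
        rcases Nat.lt_succ_iff_lt_or_eq.1 hw with hw' | hw'
      · rw [hupd u hu', hupd w hw']
        exact hadjp u w hu' hw' hadj
      · have : w = v := Fin.ext hw'
        subst this
        rw [hupd u hu', hφ'v]
        exact hxCmem.2 u hu' hadj
      · have : u = v := Fin.ext hu'
        subst this
        rw [hupd w hw', hφ'v]
        exact (hxCmem.2 w hw' hadj.symm).symm
      · exact absurd (Fin.ext (hu'.trans hw'.symm)) (G.ne_of_adj hadj)
    · -- membership
      intro u hu
      rcases Nat.lt_succ_iff_lt_or_eq.1 hu with hu' | hu'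
      · rw [hupd u hu']
        exact hmem u hu'
      · have : u = v := Fin.ext hu'
        subst this
        rw [hφ'v]
        exact hxCmem.1
    · -- candidate bound
      intro w hw
      have hwm : m < (w : ℕ) := hw
      by_cases hadj : G.Adj v w
      · rw [show φ' = Function.update φ ⟨m, hm⟩ x from hφ'_def,
          cand_succ_of_adj H₁ A G ρ φ m hm x w hadj,
          kk_succ_of_adj G m hm w hadj]
        have hxgood : ¬ ((((C w).filter fun y => H₁.Adj x y).card : ℝ)
            < (1 / (c : ℝ) - ε) * ((C w).card : ℝ)) := by
          intro hbad
          have : x ∈ Bad w := by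
            rw [hBad_def]
            exact Finset.mem_filter.2 ⟨hxC, hbad⟩
          exact hxBad w (by simp [hNbrs_def, hwm, hadj]) this
        push_neg at hxgood
        have hCw := hcand w hwm.le
        calc a ^ (kk G m w + 1) * ((A (ρ w)).card : ℝ)
            = a * (a ^ (kk G m w) * ((A (ρ w)).card : ℝ)) := by ring
          _ ≤ a * ((cand H₁ A G ρ φ m w).card : ℝ) :=
              mul_le_mul_of_nonneg_left hCw hapos.le
          _ ≤ (1 / (c : ℝ) - ε) * ((C w).card : ℝ) := by
              exact mul_le_mul_of_nonneg_right hca (Nat.cast_nonneg _)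
          _ ≤ (((C w).filter fun y => H₁.Adj x y).card : ℝ) := hxgood
      · rw [show φ' = Function.update φ ⟨m, hm⟩ x from hφ'_def,
          cand_succ_of_not_adj H₁ A G ρ φ m hm x w hadj,
          kk_succ_of_not_adj G m hm w hadj]
        exact hcand w hwm.le

/-- Embedding lemma for bounded-degree graphs: given `1/(2c)^d > 2d²ε`, pairwise
disjoint sets `A₁, …, A_{d+1}` that are pairwise `ε`-regular with densities at least
`1/c`, every graph `G` on `n ≤ d²·ε·|A_r|` vertices of maximum degree at most `d`
embeds into `H₁`, with each vertex placed in one of the `A_r` and adjacent vertices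
placed in different sets. -/
theorem embedding_lemma_bounded_degree {V : Type*} (c d : ℕ) (hc : 0 < c) (hd : 0 < d)
    (ε : ℝ) (hε : 0 < ε) (hεd : 2 * (d : ℝ) ^ 2 * ε < 1 / (2 * (c : ℝ)) ^ d)
    (H₁ : SimpleGraph V) (A : Fin (d + 1) → Finset V)
    (hdisj : ∀ i j, i ≠ j → Disjoint (A i) (A j))
    (hreg : ∀ i j : Fin (d + 1), i < j → IsRegularPair H₁ ε (A i) (A j))
    (hdens : ∀ i j : Fin (d + 1), i < j → (1 : ℝ) / (c : ℝ) ≤ pairDensity H₁ (A i) (A j))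
    (n : ℕ) (G : SimpleGraph (Fin n))
    (hΔ : ∀ v : Fin n, (G.neighborSet v).ncard ≤ d)
    (hsize : ∀ r : Fin (d + 1), (n : ℝ) ≤ (d : ℝ) ^ 2 * ε * ((A r).card : ℝ)) :
    ∃ φ : Fin n → V, Function.Injective φ ∧
      (∀ u v, G.Adj u v → H₁.Adj (φ u) (φ v)) ∧
      ∃ ρ : Fin n → Fin (d + 1),
        (∀ v, φ v ∈ A (ρ v)) ∧ ∀ u v, G.Adj u v → ρ u ≠ ρ v := by
  classical
  rcases Nat.eq_zero_or_pos n with h0 | hn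
  · subst h0
    exact ⟨Fin.elim0, fun u => u.elim0, fun u => u.elim0,
      Fin.elim0, fun u => u.elim0, fun u => u.elim0⟩
  · have hΔ' : ∀ w : Fin n, (Finset.univ.filter fun u : Fin n => G.Adj u w).card ≤ d := by
      intro w
      have h1 := hΔ w
      rw [Set.ncard_eq_toFinset_card'] at h1
      refine le_trans (le_of_eq ?_) h1
      congr 1
      ext u
      simp [SimpleGraph.mem_neighborSet, Set.mem_toFinset, G.adj_comm]
    obtain ⟨ρ, hρ⟩ := exists_proper_coloring G hΔ'
    obtain ⟨φ, hinj, hadjp, hmem, -⟩ :=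
      embed_aux c d hc hd ε hε hεd H₁ A hreg hdens n G hΔ' hsize ρ hρ hn n le_rfl
    refine ⟨φ, ?_, ?_, ρ, ?_, hρ⟩
    · intro u w heq
      by_contra hne
      exact hinj u w u.isLt w.isLt hne heq
    · intro u w hadj
      exact hadjp u w u.isLt w.isLt hadj
    · intro u
      exact hmem u u.isLt
end

section
/- Let R be a non-empty finite set of positive integers with maximum element k ≥ 2, let G₁ and G₂ be non-empty finite simple graphs, and let s ≥ 2 be an integer such that every blue/red edge-coloring of the complete graph K_s contains a blue copy of G₁ or a red copy of G₂. Then for every integer n ≥ (k³/12)·s³, every covering R-uniform hypergraph on n vertices, with any blue/red coloring of its edges, contains a blue Berge copy of G₁ or a red Berge copy of G₂. Consequently, the cover Ramsey number R̂^R(BG₁, BG₂) is finite for every finite set R. -/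
/-- `G` has a Berge copy in the hypergraph `H` (a finite set of edges, each a finite
set of vertices) all of whose hyperedges satisfy the predicate `P`: there are distinct
core vertices `y v` (one for each vertex `v` of `G`) and distinct hyperedges `f e`
(one for each edge `e` of `G`) such that each edge `e = uv` of `G` satisfies
`{y u, y v} ⊆ f e`. -/
def HasBergeCopy {α V : Type*} (G : SimpleGraph α) (H : Finset (Finset V))
    (P : Finset V → Prop) : Prop :=
  ∃ (y : α → V) (f : Sym2 α → Finset V),
    Function.Injective y ∧ Set.InjOn f G.edgeSet ∧
      ∀ e ∈ G.edgeSet, f e ∈ H ∧ P (f e) ∧ ∀ v ∈ e, y v ∈ f e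

open Finset


lemma cube_aux (a : ℕ) : (a+1)*((a+2)*(a+3)) + 4*(a+3) ≤ (a+3)^3 := by nlinarith [sq_nonneg a, a.zero_le]

lemma descFac3 (a : ℕ) : (a+3).descFactorial 3 = (a+1)*((a+2)*(a+3)) := by
  simp [Nat.descFactorial]

lemma sixChoose3 (m : ℕ) : 6 * m.choose 3 = m.descFactorial 3 := by
  rw [Nat.descFactorial_eq_factorial_mul_choose]
  norm_num [Nat.factorial]

lemma arith_main {k s n : ℕ} (hk : 3 ≤ k) (hs : 3 ≤ s) (h12 : k^3*s^3 ≤ 12*n) :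
    3 * k.choose 3 * s.choose 3 + 2 < n := by
  obtain ⟨a, rfl⟩ : ∃ a, k = a + 3 := ⟨k - 3, by omega⟩
  obtain ⟨b, rfl⟩ : ∃ b, s = b + 3 := ⟨s - 3, by omega⟩
  have hk6 : 6 * (a+3).choose 3 = (a+1)*((a+2)*(a+3)) := by rw [sixChoose3, descFac3]
  have hs6 : 6 * (b+3).choose 3 = (b+1)*((b+2)*(b+3)) := by rw [sixChoose3, descFac3]
  have hmul := Nat.mul_le_mul (cube_aux a) (cube_aux b)
  have hkey : 36 * ((a+3).choose 3 * (b+3).choose 3) + 24 < (a+3)^3 * (b+3)^3 := by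
    have e1 : 36 * ((a+3).choose 3 * (b+3).choose 3)
        = (6 * (a+3).choose 3) * (6 * (b+3).choose 3) := by ring
    rw [e1, hk6, hs6]
    nlinarith [hmul, a.zero_le, b.zero_le]
  have : 36 * ((a+3).choose 3 * (b+3).choose 3) + 24 < 12 * n := lt_of_lt_of_le hkey h12
  have hr : 3 * (a+3).choose 3 * (b+3).choose 3 = 3 * ((a+3).choose 3 * (b+3).choose 3) := by ring
  omega

lemma exists_good_subset {n k s : ℕ} (H' : Finset (Finset (Fin n)))
    (hcard : H'.card ≤ n.choose 2) (hsize : ∀ h ∈ H', h.card ≤ k)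
    (hk : 2 ≤ k) (hs : 2 ≤ s) (h12 : k^3*s^3 ≤ 12*n) :
    ∃ S : Finset (Fin n), S.card = s ∧ ∀ h ∈ H', (h ∩ S).card ≤ 2 := by
  classical
  have hk8 : 8 ≤ k^3 := by
    calc (8:ℕ) = 2^3 := by norm_num
      _ ≤ k^3 := Nat.pow_le_pow_left hk 3
  have hs4 : 4 ≤ s^2 := by
    calc (4:ℕ) = 2^2 := by norm_num
      _ ≤ s^2 := Nat.pow_le_pow_left hs 2
  have hcube : s^3 = s * s^2 := by ring
  have hA : 12*s ≤ 8*s^3 := by nlinarith [hs4, hs, s.zero_le]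
  have hB : 8*s^3 ≤ k^3*s^3 := Nat.mul_le_mul_right _ hk8
  have hsn : s ≤ n := by omega
  have hcardu : s ≤ (univ : Finset (Fin n)).card := by
    simpa [card_univ] using hsn
  rcases Nat.lt_or_ge s 3 with hs3 | hs3
  · obtain ⟨S, hSsub, hScard⟩ := Finset.exists_subset_card_eq hcardu
    exact ⟨S, hScard, fun h hh =>
      le_trans (card_le_card inter_subset_right) (by omega)⟩
  · by_contra hno
    push_neg at hno
    set P := (univ : Finset (Fin n)).powersetCard s with hPdef
    set T := H'.biUnion (fun h => h.powersetCard 3) with hTdef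
    have hPsub : P ⊆ T.biUnion (fun W => P.filter (fun S => W ⊆ S)) := by
      intro S hS
      have hScard : S.card = s := (mem_powersetCard.1 hS).2
      obtain ⟨h, hhH, hh3⟩ := hno S hScard
      obtain ⟨W, hWsub, hWcard⟩ := Finset.exists_subset_card_eq (by omega : 3 ≤ (h ∩ S).card)
      refine Finset.mem_biUnion.2 ⟨W, ?_, ?_⟩
      · exact Finset.mem_biUnion.2 ⟨h, hhH,
          mem_powersetCard.2 ⟨hWsub.trans inter_subset_left, hWcard⟩⟩
      · exact Finset.mem_filter.2 ⟨hS, hWsub.trans inter_subset_right⟩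
    have hfilter : ∀ W : Finset (Fin n), W ∈ T →
        (P.filter (fun S => W ⊆ S)).card ≤ (n-3).choose (s-3) := by
      intro W hW
      obtain ⟨h, hh, hWmem⟩ := Finset.mem_biUnion.1 hW
      have hWcard : W.card = 3 := (mem_powersetCard.1 hWmem).2
      have htarget : (((univ : Finset (Fin n)) \ W).powersetCard (s-3)).card
          = (n-3).choose (s-3) := by
        rw [card_powersetCard, card_sdiff_of_subset (subset_univ W), card_univ, Fintype.card_fin, hWcard]
      rw [← htarget]
      apply Finset.card_le_card_of_injOn (fun S => S \ W)
      · intro S hS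
        obtain ⟨hSP, hWS⟩ := Finset.mem_filter.1 hS
        obtain ⟨-, hScard⟩ := mem_powersetCard.1 hSP
        exact mem_powersetCard.2 ⟨sdiff_subset_sdiff (subset_univ S) le_rfl,
          by rw [card_sdiff_of_subset hWS, hScard, hWcard]⟩
      · intro S1 h1 S2 h2 hEq
        have hW1 : W ⊆ S1 := (Finset.mem_filter.1 h1).2
        have hW2 : W ⊆ S2 := (Finset.mem_filter.1 h2).2
        calc S1 = S1 \ W ∪ W := (sdiff_union_of_subset hW1).symm
          _ = S2 \ W ∪ W := by
              have hEq' : S1 \ W = S2 \ W := hEq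
              rw [hEq']
          _ = S2 := sdiff_union_of_subset hW2
    have hcount : P.card ≤ T.card * ((n-3).choose (s-3)) :=
      le_trans (card_le_card hPsub) (card_biUnion_le_card_mul _ _ _ hfilter)
    have hTcard : T.card ≤ H'.card * k.choose 3 :=
      card_biUnion_le_card_mul _ _ _ (fun h hh => by
        rw [card_powersetCard]; exact Nat.choose_le_choose 3 (hsize h hh))
    have hPcard : P.card = n.choose s := by
      rw [hPdef, card_powersetCard, card_univ, Fintype.card_fin]
    have hchain : n.choose s ≤ n.choose 2 * k.choose 3 * ((n-3).choose (s-3)) := by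
      calc n.choose s = P.card := hPcard.symm
        _ ≤ T.card * ((n-3).choose (s-3)) := hcount
        _ ≤ (H'.card * k.choose 3) * ((n-3).choose (s-3)) :=
            Nat.mul_le_mul_right _ hTcard
        _ ≤ (n.choose 2 * k.choose 3) * ((n-3).choose (s-3)) := by
            exact Nat.mul_le_mul_right _ (Nat.mul_le_mul_right _ hcard)
    have hid : n.choose s * s.choose 3 = n.choose 3 * ((n-3).choose (s-3)) :=
      Nat.choose_mul hs3
    have hpos33 : 0 < (n-3).choose (s-3) := Nat.choose_pos (by omega)
    have hposs3 : 0 < s.choose 3 := Nat.choose_pos hs3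
    have hstrict : n.choose 2 * k.choose 3 * ((n-3).choose (s-3)) < n.choose s := by
      rcases Nat.lt_or_ge k 3 with hk3 | hk3
      · have hz : k.choose 3 = 0 := Nat.choose_eq_zero_of_lt hk3
        simpa [hz] using Nat.choose_pos hsn
      · have harith : 3 * k.choose 3 * s.choose 3 + 2 < n := arith_main hk3 hs3 h12
        have hn2 : 2 ≤ n := by omega
        have hpos2 : 0 < n.choose 2 := Nat.choose_pos hn2
        have h3 : n.choose 3 * 3 = n.choose 2 * (n - 2) := Nat.choose_succ_right_eq n 2
        have h4 : n.choose 2 * k.choose 3 * s.choose 3 < n.choose 3 := by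
          have hlt : n.choose 2 * (3 * k.choose 3 * s.choose 3) < n.choose 2 * (n - 2) :=
            mul_lt_mul_of_pos_left (by omega) hpos2
          have : 3 * (n.choose 2 * k.choose 3 * s.choose 3) < 3 * n.choose 3 := by
            calc 3 * (n.choose 2 * k.choose 3 * s.choose 3)
                = n.choose 2 * (3 * k.choose 3 * s.choose 3) := by ring
              _ < n.choose 2 * (n - 2) := hlt
              _ = n.choose 3 * 3 := h3.symm
              _ = 3 * n.choose 3 := by ring
          omega
        have h5 : (n.choose 2 * k.choose 3 * ((n-3).choose (s-3))) * s.choose 3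
            < n.choose s * s.choose 3 := by
          calc (n.choose 2 * k.choose 3 * ((n-3).choose (s-3))) * s.choose 3
              = (n.choose 2 * k.choose 3 * s.choose 3) * ((n-3).choose (s-3)) := by ring
            _ < n.choose 3 * ((n-3).choose (s-3)) := by
                exact mul_lt_mul_of_pos_right h4 hpos33
            _ = n.choose s * s.choose 3 := hid.symm
        exact Nat.lt_of_mul_lt_mul_right h5
    exact absurd hchain (not_le.2 hstrict)

lemma exists_min_cover {n : ℕ} (H : Finset (Finset (Fin n)))
    (hcov : ∀ u v : Fin n, u ≠ v → ∃ h ∈ H, u ∈ h ∧ v ∈ h) :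
    ∃ H' : Finset (Finset (Fin n)), H' ⊆ H ∧
      (∀ u v : Fin n, u ≠ v → ∃ h ∈ H', u ∈ h ∧ v ∈ h) ∧ H'.card ≤ n.choose 2 := by
  classical
  have hne : (H.powerset.filter
      (fun F => ∀ u v : Fin n, u ≠ v → ∃ h ∈ F, u ∈ h ∧ v ∈ h)).Nonempty :=
    ⟨H, mem_filter.2 ⟨mem_powerset_self H, hcov⟩⟩
  obtain ⟨H', hH'mem, hmin⟩ := Finset.exists_min_image _ Finset.card hne
  have hH'sub : H' ⊆ H := mem_powerset.1 (mem_filter.1 hH'mem).1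
  have hH'cov : ∀ u v : Fin n, u ≠ v → ∃ h ∈ H', u ∈ h ∧ v ∈ h := (mem_filter.1 hH'mem).2
  refine ⟨H', hH'sub, hH'cov, ?_⟩
  have hpriv : ∀ h ∈ H', ∃ u v : Fin n, u ≠ v ∧ u ∈ h ∧ v ∈ h ∧
      ∀ e ∈ H', u ∈ e → v ∈ e → e = h := by
    intro h hh
    by_contra hcon
    push_neg at hcon
    have hcov' : ∀ u v : Fin n, u ≠ v → ∃ e ∈ H'.erase h, u ∈ e ∧ v ∈ e := by
      intro u v huv
      obtain ⟨e, he, hue, hve⟩ := hH'cov u v huv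
      by_cases heh : e = h
      · subst heh
        obtain ⟨e', he', hue', hve', hne'⟩ := hcon u v huv hue hve
        exact ⟨e', mem_erase.2 ⟨hne', he'⟩, hue', hve'⟩
      · exact ⟨e, mem_erase.2 ⟨heh, he⟩, hue, hve⟩
    have hmem' : H'.erase h ∈ H.powerset.filter
        (fun F => ∀ u v : Fin n, u ≠ v → ∃ h ∈ F, u ∈ h ∧ v ∈ h) :=
      mem_filter.2 ⟨mem_powerset.2 ((erase_subset h H').trans hH'sub), hcov'⟩
    have h1 := hmin _ hmem'
    have h2 := card_erase_lt_of_mem hh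
    omega
  choose u v hne' hu hv huniq using hpriv
  let f : Finset (Fin n) → Finset (Fin n) :=
    fun h => if hh : h ∈ H' then {u h hh, v h hh} else ∅
  have hf : ∀ (h) (hh : h ∈ H'), f h = {u h hh, v h hh} := by
    intro h hh
    simp only [f, dif_pos hh]
  have htarget : ((univ : Finset (Fin n)).powersetCard 2).card = n.choose 2 := by
    rw [card_powersetCard, card_univ, Fintype.card_fin]
  rw [← htarget]
  apply Finset.card_le_card_of_injOn f
  · intro h hh
    rw [hf h hh]
    refine mem_powersetCard.2 ⟨subset_univ _, ?_⟩
    rw [card_insert_of_notMem (by simp [hne' h hh]), card_singleton]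
  · intro h1 hh1 h2 hh2 hEq
    have hh1' : h1 ∈ H' := hh1
    have hh2' : h2 ∈ H' := hh2
    have hEq' : ({u h1 hh1', v h1 hh1'} : Finset (Fin n)) = {u h2 hh2', v h2 hh2'} := by
      rw [← hf h1 hh1', ← hf h2 hh2']; exact hEq
    have hu1 : u h1 hh1' ∈ h2 := by
      have hmem : u h1 hh1' ∈ ({u h2 hh2', v h2 hh2'} : Finset (Fin n)) := by
        rw [← hEq']; simp
      rcases mem_insert.1 hmem with h | h
      · rw [h]; exact hu h2 hh2'
      · rw [mem_singleton.1 h]; exact hv h2 hh2'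
    have hv1 : v h1 hh1' ∈ h2 := by
      have hmem : v h1 hh1' ∈ ({u h2 hh2', v h2 hh2'} : Finset (Fin n)) := by
        rw [← hEq']; simp
      rcases mem_insert.1 hmem with h | h
      · rw [h]; exact hu h2 hh2'
      · rw [mem_singleton.1 h]; exact hv h2 hh2'
    exact (huniq h1 hh1' h2 hh2' hu1 hv1).symm

lemma build_berge {α : Type*} {n s : ℕ} (G : SimpleGraph α)
    (H : Finset (Finset (Fin n))) (P : Finset (Fin n) → Prop)
    (S : Finset (Fin n)) (vmap : Fin s → Fin n) (hvS : ∀ i, vmap i ∈ S)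
    (hvinj : Function.Injective vmap)
    (c : Sym2 (Fin n) → Finset (Fin n))
    (hcH : ∀ z : Sym2 (Fin n), ¬z.IsDiag → c z ∈ H ∧ ∀ x ∈ z, x ∈ c z)
    (hkey : ∀ a b a' b' : Fin n, a ≠ b → a' ≠ b' → a ∈ S → b ∈ S → a' ∈ S → b' ∈ S →
      c s(a, b) = c s(a', b') → s(a, b) = s(a', b'))
    (φ : α → Fin s) (hφinj : Function.Injective φ)
    (hφ : ∀ u v, G.Adj u v → P (c (Sym2.map vmap s(φ u, φ v)))) :
    HasBergeCopy G H P := by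
  have hyinj : Function.Injective (fun a => vmap (φ a)) := hvinj.comp hφinj
  refine ⟨fun a => vmap (φ a), fun e => c (Sym2.map (fun a => vmap (φ a)) e),
    hyinj, ?_, ?_⟩
  · have key2 : ∀ e1 e2 : Sym2 α, e1 ∈ G.edgeSet → e2 ∈ G.edgeSet →
        c (Sym2.map (fun a => vmap (φ a)) e1) = c (Sym2.map (fun a => vmap (φ a)) e2) →
        e1 = e2 := by
      intro e1 e2
      induction e1 using Sym2.ind with
      | _ u1 v1 =>
        induction e2 using Sym2.ind with
        | _ u2 v2 =>
          intro he1 he2 hfe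
          rw [Sym2.map_pair_eq, Sym2.map_pair_eq] at hfe
          have h1 : G.Adj u1 v1 := G.mem_edgeSet.1 he1
          have h2 : G.Adj u2 v2 := G.mem_edgeSet.1 he2
          have hne1 : vmap (φ u1) ≠ vmap (φ v1) := fun hh => h1.ne (hφinj (hvinj hh))
          have hne2 : vmap (φ u2) ≠ vmap (φ v2) := fun hh => h2.ne (hφinj (hvinj hh))
          have hz := hkey _ _ _ _ hne1 hne2 (hvS _) (hvS _) (hvS _) (hvS _) hfe
          have hzz : Sym2.map (fun a => vmap (φ a)) s(u1, v1)
              = Sym2.map (fun a => vmap (φ a)) s(u2, v2) := by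
            rw [Sym2.map_pair_eq, Sym2.map_pair_eq]; exact hz
          exact Sym2.map.injective hyinj hzz
    exact fun e1 he1 e2 he2 h => key2 e1 e2 he1 he2 h
  · intro e
    induction e using Sym2.ind with
    | _ u v =>
      intro he
      dsimp only
      have hadj : G.Adj u v := G.mem_edgeSet.1 he
      have hne : vmap (φ u) ≠ vmap (φ v) := fun hh => hadj.ne (hφinj (hvinj hh))
      have hnd : ¬(s(vmap (φ u), vmap (φ v))).IsDiag := by
        rw [Sym2.mk_isDiag_iff]; exact hne
      have hcz := hcH _ hnd
      have hmapeq : Sym2.map (fun a => vmap (φ a)) s(u, v)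
          = s(vmap (φ u), vmap (φ v)) := Sym2.map_pair_eq _ u v
      rw [hmapeq]
      refine ⟨hcz.1, ?_, ?_⟩
      · have hp := hφ u v hadj
        have hmm : Sym2.map vmap s(φ u, φ v) = s(vmap (φ u), vmap (φ v)) :=
          Sym2.map_pair_eq _ _ _
        rwa [hmm] at hp
      · intro w hw
        rcases Sym2.mem_iff.1 hw with h | h
        · rw [h]; exact hcz.2 _ (by simp)
        · rw [h]; exact hcz.2 _ (by simp)

/-- Cover Ramsey numbers are finite for any finite set `R` of positive integers with
maximum `k ≥ 2`: if `s` has the Ramsey property for `(G₁, G₂)` and `n ≥ (k³/12)·s³`,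
then every 2-colored covering `R`-uniform hypergraph on `n` vertices contains a blue
Berge-`G₁` or a red Berge-`G₂`. -/
theorem cover_ramsey_finite_for_R
    {α₁ α₂ : Type*} [Fintype α₁] [Fintype α₂]
    (R : Finset ℕ) (hR : R.Nonempty) (hRpos : ∀ r ∈ R, 0 < r)
    (k : ℕ) (hkmax : k = R.max' hR) (hk : 2 ≤ k)
    (G₁ : SimpleGraph α₁) (G₂ : SimpleGraph α₂)
    (hG₁ : G₁.edgeSet.Nonempty) (hG₂ : G₂.edgeSet.Nonempty)
    (s : ℕ) (hs : 2 ≤ s)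
    (hRam : ∀ χ : Sym2 (Fin s) → Bool,
      (∃ φ : α₁ → Fin s, Function.Injective φ ∧
        ∀ u v, G₁.Adj u v → χ s(φ u, φ v) = true) ∨
      (∃ φ : α₂ → Fin s, Function.Injective φ ∧
        ∀ u v, G₂.Adj u v → χ s(φ u, φ v) = false))
    (n : ℕ) (hn : ((k : ℝ) ^ 3 / 12) * (s : ℝ) ^ 3 ≤ (n : ℝ))
    (H : Finset (Finset (Fin n)))
    (hunif : ∀ h ∈ H, h.card ∈ R)
    (hcov : ∀ u v : Fin n, u ≠ v → ∃ h ∈ H, u ∈ h ∧ v ∈ h)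
    (col : Finset (Fin n) → Bool) :
    HasBergeCopy G₁ H (fun h => col h = true) ∨
      HasBergeCopy G₂ H (fun h => col h = false) := by
  classical
  -- the numeric hypothesis, in ℕ
  have h12 : k ^ 3 * s ^ 3 ≤ 12 * n := by
    have hr : ((k ^ 3 * s ^ 3 : ℕ) : ℝ) ≤ ((12 * n : ℕ) : ℝ) := by
      push_cast
      nlinarith [hn]
    exact_mod_cast hr
  -- a minimal covering subfamily
  obtain ⟨H', hH'sub, hH'cov, hH'card⟩ := exists_min_cover H hcov
  have hsize : ∀ h ∈ H', h.card ≤ k := fun h hh => by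
    rw [hkmax]; exact Finset.le_max' R _ (hunif h (hH'sub hh))
  -- a good core set
  obtain ⟨S, hScard, hgood⟩ := exists_good_subset H' hH'card hsize hk hs h12
  -- enumeration of the core set
  let vmap : Fin s → Fin n := fun i => (S.orderIsoOfFin hScard i : Fin n)
  have hvS : ∀ i, vmap i ∈ S := fun i => (S.orderIsoOfFin hScard i).2
  have hvinj : Function.Injective vmap := fun i j hij =>
    (S.orderIsoOfFin hScard).injective (Subtype.ext hij)
  -- choice of covering hyperedges
  have hctot : ∀ z : Sym2 (Fin n), ∃ e : Finset (Fin n),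
      ¬z.IsDiag → e ∈ H' ∧ ∀ x ∈ z, x ∈ e := by
    intro z
    induction z using Sym2.ind with
    | _ x y =>
      by_cases hxy : x = y
      · exact ⟨∅, fun hd => absurd (Sym2.mk_isDiag_iff.2 hxy) hd⟩
      · obtain ⟨e, he, hxe, hye⟩ := hH'cov x y hxy
        refine ⟨e, fun _ => ⟨he, fun w hw => ?_⟩⟩
        rcases Sym2.mem_iff.1 hw with h | h
        · rw [h]; exact hxe
        · rw [h]; exact hye
  choose c hc using hctot
  have hcH : ∀ z : Sym2 (Fin n), ¬z.IsDiag → c z ∈ H ∧ ∀ x ∈ z, x ∈ c z :=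
    fun z hz => ⟨hH'sub (hc z hz).1, (hc z hz).2⟩
  -- injectivity of the choice on pairs from S
  have hkey : ∀ a b a' b' : Fin n, a ≠ b → a' ≠ b' → a ∈ S → b ∈ S → a' ∈ S → b' ∈ S →
      c s(a, b) = c s(a', b') → s(a, b) = s(a', b') := by
    intro a b a' b' hab hab' haS hbS haS' hbS' hcc
    have h1 := hc s(a, b) (by rw [Sym2.mk_isDiag_iff]; exact hab)
    have h2 := hc s(a', b') (by rw [Sym2.mk_isDiag_iff]; exact hab')
    have haE : a ∈ c s(a, b) := h1.2 a (by simp)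
    have hbE : b ∈ c s(a, b) := h1.2 b (by simp)
    have haE' : a' ∈ c s(a, b) := by rw [hcc]; exact h2.2 a' (by simp)
    have hbE' : b' ∈ c s(a, b) := by rw [hcc]; exact h2.2 b' (by simp)
    have hsub : ({a, b} : Finset (Fin n)) ⊆ c s(a, b) ∩ S := by
      intro x hx
      rcases Finset.mem_insert.1 hx with rfl | hx
      · exact Finset.mem_inter.2 ⟨haE, haS⟩
      · rw [Finset.mem_singleton.1 hx]; exact Finset.mem_inter.2 ⟨hbE, hbS⟩
    have hcard2 : ({a, b} : Finset (Fin n)).card = 2 := by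
      rw [Finset.card_insert_of_notMem (by simp [hab]), Finset.card_singleton]
    have heq : ({a, b} : Finset (Fin n)) = c s(a, b) ∩ S :=
      Finset.eq_of_subset_of_card_le hsub (by rw [hcard2]; exact hgood _ h1.1)
    have ha' : a' ∈ ({a, b} : Finset (Fin n)) := by
      rw [heq]; exact Finset.mem_inter.2 ⟨haE', haS'⟩
    have hb' : b' ∈ ({a, b} : Finset (Fin n)) := by
      rw [heq]; exact Finset.mem_inter.2 ⟨hbE', hbS'⟩
    have ha'' := Finset.mem_insert.1 ha'
    have hb'' := Finset.mem_insert.1 hb'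
    simp only [Finset.mem_singleton] at ha'' hb''
    rcases ha'' with rfl | rfl
    · rcases hb'' with rfl | rfl
      · exact absurd rfl hab'
      · rfl
    · rcases hb'' with rfl | rfl
      · exact Sym2.eq_swap
      · exact absurd rfl hab'
  -- the auxiliary coloring
  rcases hRam (fun z => col (c (Sym2.map vmap z))) with ⟨φ, hφinj, hφ⟩ | ⟨φ, hφinj, hφ⟩
  · left
    exact build_berge G₁ H (fun h => col h = true) S vmap hvS hvinj c hcH hkey φ hφinj hφ
  · right
    exact build_berge G₂ H (fun h => col h = false) S vmap hvS hvinj c hcH hkey φ hφinj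
      (fun u v hadj => by simpa using hφ u v hadj)
end
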